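/- In the setting of the HV-AG transformation with stochastic transition rates (Σ_{y∈X} q(y|x,a) = 1 for all x, a) and bounded costs c: let φ be a stationary policy, let v̄^φ(x) denote the β̄-discounted cost of φ in the transformed MDP, and set h^φ(x) := μ(x)·(v̄^φ(x) − v̄^φ(ℓ)). Then the Poisson-type equation v̄^φ(ℓ) + h^φ(x) = c(x,φ(x)) + Σ_{y∈X} q(y|x,φ(x)) h^φ(y) holds for all x ∈ X, and consequently the long-run average cost w^φ(x) := limsup_{N→∞} (1/N) Σ_{n=0}^{N−1} Q_φⁿ c_φ(x) equals v̄^φ(ℓ) for every initial state x ∈ X. -/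

import Mathlib

/-!
The transformed kernel `p̄` is stochastic on `X ∪ {x̄}`, so `v̄` is the bounded solution of
`v̄ = c̄ + β̄ P̄ v̄`. Multiplying this equation at `x` by `β̄ μ(x)` undoes the normalisation of `p̄`,
and the extra mass that `p̄` puts on `ℓ` is exactly what turns it into the Poisson equation
`g + h = c_φ + Q_φ h` for `g = v̄(ℓ)` and `h = μ (v̄ - v̄(ℓ))`. Iterating the Poisson equation,
`∑_{n<N} Q_φⁿ c_φ = N g + h - Q_φᴺ h` telescopes, and since `h` is bounded and `Q_φ` stochastic the
Cesàro averages converge to `g`.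
-/

open Filter Topology

noncomputable def iterR {X : Type*} (P : X → X → ℝ) (f : X → ℝ) : ℕ → X → ℝ
  | 0 => f
  | n + 1 => fun x => ∑' y, P x y * iterR P f n y

structure IsStochastic {Y : Type*} (P : Y → Y → ℝ) : Prop where
  nonneg : ∀ x y, 0 ≤ P x y
  hasSum_one : ∀ x, HasSum (P x) 1

section Weighted

lemma norm_mul_le_mul_of_abs_le {a b C : ℝ} (ha : 0 ≤ a) (hb : |b| ≤ C) : ‖a * b‖ ≤ a * C := by
  rw [Real.norm_eq_abs, abs_mul, abs_of_nonneg ha]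
  exact mul_le_mul_of_nonneg_left hb ha

variable {ι : Type*} {p f : ι → ℝ} {s C : ℝ}

lemma summable_mul_of_abs_le (hp0 : ∀ i, 0 ≤ p i) (hp : Summable p) (hf : ∀ i, |f i| ≤ C) :
    Summable fun i => p i * f i :=
  (hp.mul_right C).of_norm_bounded fun i => norm_mul_le_mul_of_abs_le (hp0 i) (hf i)

lemma abs_tsum_mul_le (hp0 : ∀ i, 0 ≤ p i) (hp : HasSum p s) (hf : ∀ i, |f i| ≤ C) :
    |∑' i, p i * f i| ≤ s * C :=
  tsum_of_norm_bounded (hp.mul_right C) fun i => norm_mul_le_mul_of_abs_le (hp0 i) (hf i)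

lemma tsum_mul_tsum_pow_mul_comm {β : ℝ} {g : ℕ → ι → ℝ} (hp0 : ∀ i, 0 ≤ p i)
    (hp : Summable p) (hβ0 : 0 ≤ β) (hβ1 : β < 1) (hg : ∀ n i, |g n i| ≤ C) :
    ∑' i, p i * ∑' n, β ^ n * g n i = ∑' n, β ^ n * ∑' i, p i * g n i := by
  have hgeo := summable_geometric_of_lt_one hβ0 hβ1
  have hpg : ∀ n i, |p i * g n i| ≤ p i * C := fun n i => norm_mul_le_mul_of_abs_le (hp0 i) (hg n i)
  have hprod : Summable (Function.uncurry fun n i => β ^ n * (p i * g n i)) :=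
    (hgeo.mul_of_nonneg (hp.mul_right C) (fun n => pow_nonneg hβ0 n)
      fun i => (abs_nonneg _).trans (hpg 0 i)).of_norm_bounded
        fun ⟨n, i⟩ => norm_mul_le_mul_of_abs_le (pow_nonneg hβ0 n) (hpg n i)
  calc ∑' i, p i * ∑' n, β ^ n * g n i = ∑' i, ∑' n, β ^ n * (p i * g n i) :=
        tsum_congr fun i => by
          rw [← tsum_mul_left]
          exact tsum_congr fun n => by ring
    _ = ∑' n, ∑' i, β ^ n * (p i * g n i) :=
        hprod.tsum_comm' (fun n => (summable_mul_of_abs_le hp0 hp (hg n)).mul_left _)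
          fun i => summable_mul_of_abs_le (fun n => pow_nonneg hβ0 n) hgeo (fun n => hpg n i)
    _ = ∑' n, β ^ n * ∑' i, p i * g n i := tsum_congr fun n => tsum_mul_left

end Weighted

lemma hasSum_of_hasSum_comp_some {Y G : Type*} [AddCommGroup G] [TopologicalSpace G]
    [IsTopologicalAddGroup G] {f : Option Y → G} {a : G} (h : HasSum (f ∘ some) a) :
    HasSum f (a + f none) := by
  classical
  have h0 : HasSum (Function.update f none 0) a := by
    refine ((Option.some_injective Y).hasSum_iff ?_).mp ?_
    · rintro (_ | x) hx
      · simp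
      · exact absurd ⟨x, rfl⟩ hx
    · simpa [Function.comp_def] using h
  simpa [add_comm] using h0.update none (f none)

namespace IsStochastic

variable {Y : Type*} {P : Y → Y → ℝ} {f c h : Y → ℝ} {C g : ℝ}

lemma summable_mul (hP : IsStochastic P) (x : Y) (hf : ∀ y, |f y| ≤ C) :
    Summable fun y => P x y * f y :=
  summable_mul_of_abs_le (hP.nonneg x) (hP.hasSum_one x).summable hf

lemma abs_iterR_le (hP : IsStochastic P) (hf : ∀ y, |f y| ≤ C) (n : ℕ) (x : Y) :
    |iterR P f n x| ≤ C := by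
  induction n generalizing x with
  | zero => exact hf x
  | succ n ih => exact (abs_tsum_mul_le (hP.nonneg x) (hP.hasSum_one x) ih).trans_eq (one_mul C)

lemma iterR_of_poisson (hP : IsStochastic P) (hh : ∀ y, |h y| ≤ C)
    (hpoisson : ∀ x, g + h x = c x + ∑' y, P x y * h y) (n : ℕ) (x : Y) :
    iterR P c n x = g + iterR P h n x - iterR P h (n + 1) x := by
  induction n generalizing x with
  | zero =>
    show c x = g + h x - ∑' y, P x y * h y
    linarith [hpoisson x]
  | succ n ih =>
    have hs : ∀ m, Summable fun y => P x y * iterR P h m y :=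
      fun m => hP.summable_mul x (hP.abs_iterR_le hh m)
    calc iterR P c (n + 1) x
        = ∑' y, (P x y * g + (P x y * iterR P h n y - P x y * iterR P h (n + 1) y)) :=
          tsum_congr fun y => by rw [ih]; ring
      _ = g + iterR P h (n + 1) x - iterR P h (n + 2) x := by
        rw [((hP.hasSum_one x).mul_right g).summable.tsum_add ((hs n).sub (hs (n + 1))),
          (hs n).tsum_sub (hs (n + 1)), tsum_mul_right, (hP.hasSum_one x).tsum_eq, one_mul,
          add_sub_assoc]
        rfl

lemma sum_range_iterR_of_poisson (hP : IsStochastic P) (hh : ∀ y, |h y| ≤ C)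
    (hpoisson : ∀ x, g + h x = c x + ∑' y, P x y * h y) (N : ℕ) (x : Y) :
    ∑ n ∈ Finset.range N, iterR P c n x = N * g + (h x - iterR P h N x) := by
  rw [Finset.sum_congr rfl fun n _ => (hP.iterR_of_poisson hh hpoisson n x).trans
    (add_sub_assoc g _ _), Finset.sum_add_distrib, Finset.sum_const, Finset.card_range,
    Finset.sum_range_sub' (fun n => iterR P h n x), nsmul_eq_mul]
  rfl

lemma tendsto_average_iterR_of_poisson (hP : IsStochastic P) (hh : ∀ y, |h y| ≤ C)
    (hpoisson : ∀ x, g + h x = c x + ∑' y, P x y * h y) (x : Y) :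
    Tendsto (fun N : ℕ => (1 / (N : ℝ)) * ∑ n ∈ Finset.range N, iterR P c n x) atTop (𝓝 g) := by
  have hrem : Tendsto (fun N : ℕ => (h x - iterR P h N x) / N) atTop (𝓝 0) := by
    refine squeeze_zero_norm (fun N => ?_) (tendsto_const_div_atTop_nhds_zero_nat (C + C))
    rw [Real.norm_eq_abs, abs_div, Nat.abs_cast]
    exact div_le_div_of_nonneg_right
      ((abs_sub _ _).trans (add_le_add (hh x) (hP.abs_iterR_le hh N x))) N.cast_nonneg
  have hlim := hrem.const_add g
  rw [add_zero] at hlim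
  refine hlim.congr' ?_
  filter_upwards [eventually_ne_atTop 0] with N hN
  rw [hP.sum_range_iterR_of_poisson hh hpoisson]
  field_simp

end IsStochastic

section Discounted

variable {Y : Type*} {P : Y → Y → ℝ} {f : Y → ℝ} {β C : ℝ}

noncomputable def discountedValue (P : Y → Y → ℝ) (β : ℝ) (f : Y → ℝ) (x : Y) : ℝ :=
  ∑' n : ℕ, β ^ n * iterR P f n x

lemma abs_discountedValue_le (hP : IsStochastic P) (hβ0 : 0 ≤ β) (hβ1 : β < 1)
    (hf : ∀ y, |f y| ≤ C) (x : Y) : |discountedValue P β f x| ≤ (1 - β)⁻¹ * C :=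
  abs_tsum_mul_le (fun n => pow_nonneg hβ0 n) (hasSum_geometric_of_lt_one hβ0 hβ1)
    fun n => hP.abs_iterR_le hf n x

lemma discountedValue_eq_add (hP : IsStochastic P) (hβ0 : 0 ≤ β) (hβ1 : β < 1)
    (hf : ∀ y, |f y| ≤ C) (x : Y) :
    discountedValue P β f x = f x + β * ∑' y, P x y * discountedValue P β f y := by
  have hs : Summable fun n : ℕ => β ^ n * iterR P f n x :=
    summable_mul_of_abs_le (fun n => pow_nonneg hβ0 n) (summable_geometric_of_lt_one hβ0 hβ1)
      fun n => hP.abs_iterR_le hf n x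
  simp only [discountedValue]
  rw [hs.tsum_eq_zero_add, pow_zero, one_mul,
    tsum_mul_tsum_pow_mul_comm (hP.nonneg x) (hP.hasSum_one x).summable hβ0 hβ1
      (hP.abs_iterR_le hf), ← tsum_mul_left]
  congr 2
  funext n
  rw [pow_succ', mul_assoc]
  rfl

lemma iterR_eq_zero_of_absorbing [DecidableEq Y] {a : Y}
    (ha : ∀ y, P a y = if y = a then 1 else 0) (hf : f a = 0) (n : ℕ) : iterR P f n a = 0 := by
  induction n with
  | zero => exact hf
  | succ n ih => simp only [iterR, ha, ite_mul, one_mul, zero_mul, tsum_ite_eq, ih]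

lemma discountedValue_eq_zero_of_absorbing [DecidableEq Y] {a : Y}
    (ha : ∀ y, P a y = if y = a then 1 else 0) (hf : f a = 0) : discountedValue P β f a = 0 := by
  simp [discountedValue, iterR_eq_zero_of_absorbing ha hf]

end Discounted

lemma sub_one_le_mul_of_le {K m β : ℝ} (hK : 1 ≤ K) (hm : m ≤ K) (hβl : (K - 1) / K ≤ β)
    (hβu : β ≤ 1) : m - 1 ≤ β * m := by
  rw [div_le_iff₀ (by linarith)] at hβl
  nlinarith [mul_le_mul_of_nonneg_right hm (sub_nonneg.2 hβu)]

section HVAG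

variable {X : Type*}

noncomputable def hvagCost (μ c : X → ℝ) : Option X → ℝ
  | none => 0
  | some x => c x / μ x

lemma abs_hvagCost_le {μ c : X → ℝ} {C : ℝ} (hμ1 : ∀ x, 1 ≤ μ x) (hc : ∀ x, |c x| ≤ C)
    (hC : 0 ≤ C) (y : Option X) : |hvagCost μ c y| ≤ C := by
  cases y with
  | none => exact abs_zero.trans_le hC
  | some y =>
    show |c y / μ y| ≤ C
    rw [abs_div, abs_of_nonneg (zero_le_one.trans (hμ1 y))]
    exact (div_le_self (abs_nonneg _) (hμ1 y)).trans (hc y)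

variable [DecidableEq X] (ℓ : X) (Q : X → X → ℝ) (μ : X → ℝ) (β : ℝ)

noncomputable def offMass (x : X) : ℝ := ∑' z, if z = ℓ then 0 else Q x z * μ z

/-- `β μ(x) p̄(y|x)`: the kernel with its normalisation undone. -/
noncomputable def hvagWeight (x y : X) : ℝ :=
  if y = ℓ then μ x - 1 - offMass ℓ Q μ x else Q x y * μ y

/-- The transformed kernel `p̄`; `none` is the absorbing cost-free state `x̄`. -/
noncomputable def hvagKernel : Option X → Option X → ℝ
  | none, none => 1
  | none, some _ => 0
  | some x, none => 1 - (μ x - 1) / (β * μ x)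
  | some x, some y =>
      if y = ℓ then (μ x - 1 - ∑' z, (if z = ℓ then 0 else Q x z * μ z)) / (β * μ x)
      else Q x y * μ y / (β * μ x)

variable {ℓ Q μ β}

lemma hvagWeight_nonneg (hQ0 : ∀ x y, 0 ≤ Q x y) (hμ0 : ∀ y, 0 ≤ μ y)
    (hμ : ∀ x, 1 + offMass ℓ Q μ x ≤ μ x) (x y : X) : 0 ≤ hvagWeight ℓ Q μ x y := by
  unfold hvagWeight
  split_ifs
  · linarith [hμ x]
  · exact mul_nonneg (hQ0 x y) (hμ0 y)

lemma hasSum_hvagWeight {K : ℝ} (hQ0 : ∀ x y, 0 ≤ Q x y) (hQ : ∀ x, Summable (Q x))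
    (hμK : ∀ y, |μ y| ≤ K) (x : X) : HasSum (hvagWeight ℓ Q μ x) (μ x - 1) := by
  have hoff : HasSum (fun y => if y = ℓ then 0 else Q x y * μ y) (offMass ℓ Q μ x) :=
    (hasSum_ite_sub_hasSum (summable_mul_of_abs_le (hQ0 x) (hQ x) hμK).hasSum ℓ).summable.hasSum
  convert hoff.add (hasSum_ite_eq ℓ (μ x - 1 - offMass ℓ Q μ x)) using 1
  · funext y
    unfold hvagWeight
    split_ifs <;> ring
  · ring

lemma hvagKernel_some_some (x y : X) :
    hvagKernel ℓ Q μ β (some x) (some y) = hvagWeight ℓ Q μ x y / (β * μ x) := by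
  simp only [hvagKernel, hvagWeight, offMass]
  split_ifs <;> rfl

lemma hvagKernel_none (y : Option X) : hvagKernel ℓ Q μ β none y = if y = none then 1 else 0 := by
  cases y <;> rfl

lemma mul_hvagKernel_some_some (hw0 : ∀ x y, 0 ≤ hvagWeight ℓ Q μ x y)
    (hw : ∀ x, HasSum (hvagWeight ℓ Q μ x) (μ x - 1)) (hβμ : ∀ x, μ x - 1 ≤ β * μ x) (x y : X) :
    β * μ x * hvagKernel ℓ Q μ β (some x) (some y) = hvagWeight ℓ Q μ x y := by
  rw [hvagKernel_some_some]
  rcases eq_or_ne (β * μ x) 0 with h0 | h0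
  · -- a weight never exceeds the row total `μ x - 1 ≤ β μ x`, so here it vanishes
    have hle := (le_hasSum (hw x) y fun j _ => hw0 x j).trans (hβμ x)
    rw [h0, zero_mul]
    exact le_antisymm (hw0 x y) (h0 ▸ hle)
  · exact mul_div_cancel₀ _ h0

lemma isStochastic_hvagKernel (hw0 : ∀ x y, 0 ≤ hvagWeight ℓ Q μ x y)
    (hw : ∀ x, HasSum (hvagWeight ℓ Q μ x) (μ x - 1)) (hβμ : ∀ x, μ x - 1 ≤ β * μ x)
    (hμ0 : ∀ x, 0 ≤ μ x) (hβ0 : 0 ≤ β) : IsStochastic (hvagKernel ℓ Q μ β) := by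
  constructor
  · rintro (_ | x) (_ | y)
    · exact zero_le_one
    · exact le_rfl
    · exact sub_nonneg.2 (div_le_one_of_le₀ (hβμ x) (mul_nonneg hβ0 (hμ0 x)))
    · rw [hvagKernel_some_some]
      exact div_nonneg (hw0 x y) (mul_nonneg hβ0 (hμ0 x))
  · rintro (_ | x)
    · rw [show hvagKernel ℓ Q μ β none = _ from funext hvagKernel_none]
      exact hasSum_ite_eq none 1
    · have hrow := hasSum_of_hasSum_comp_some (f := hvagKernel ℓ Q μ β (some x))
        (by simpa only [Function.comp_def, hvagKernel_some_some] using
          (hw x).div_const (β * μ x))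
      have hone : (1 : ℝ) = (μ x - 1) / (β * μ x) + (1 - (μ x - 1) / (β * μ x)) := by ring
      rwa [hone]

lemma mul_discountedValue_hvagKernel {c : X → ℝ} {C : ℝ}
    (hw0 : ∀ x y, 0 ≤ hvagWeight ℓ Q μ x y) (hw : ∀ x, HasSum (hvagWeight ℓ Q μ x) (μ x - 1))
    (hβμ : ∀ x, μ x - 1 ≤ β * μ x) (hμ1 : ∀ x, 1 ≤ μ x) (hβ0 : 0 ≤ β) (hβ1 : β < 1)
    (hc : ∀ y, |hvagCost μ c y| ≤ C) (x : X) :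
    μ x * discountedValue (hvagKernel ℓ Q μ β) β (hvagCost μ c) (some x) =
      c x + ∑' y, hvagWeight ℓ Q μ x y *
        discountedValue (hvagKernel ℓ Q μ β) β (hvagCost μ c) (some y) := by
  set v := discountedValue (hvagKernel ℓ Q μ β) β (hvagCost μ c)
  have hμ0 : ∀ x, 0 ≤ μ x := fun x => zero_le_one.trans (hμ1 x)
  have hP := isStochastic_hvagKernel hw0 hw hβμ hμ0 hβ0
  have hnone : v none = 0 := discountedValue_eq_zero_of_absorbing hvagKernel_none rfl
  have hsome : ∑' y : X, hvagKernel ℓ Q μ β (some x) (some y) * v (some y) =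
      ∑' y, hvagKernel ℓ Q μ β (some x) y * v y := by
    refine (Option.some_injective X).tsum_eq
      (f := fun y => hvagKernel ℓ Q μ β (some x) y * v y) fun y hy => ?_
    cases y with
    | none => simp [hnone] at hy
    | some y => exact ⟨y, rfl⟩
  have hfix : v (some x) = hvagCost μ c (some x) + β * ∑' y, hvagKernel ℓ Q μ β (some x) y * v y :=
    discountedValue_eq_add hP hβ0 hβ1 hc (some x)
  rw [hfix, ← hsome, mul_add, ← tsum_mul_left, ← tsum_mul_left]
  change μ x * (c x / μ x) + _ = _
  rw [mul_div_cancel₀ _ (by linarith [hμ1 x])]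
  congr 1
  refine tsum_congr fun y => ?_
  rw [← mul_hvagKernel_some_some hw0 hw hβμ x y]
  ring

lemma poisson_of_mul_eq_add_tsum_hvagWeight {c v : X → ℝ} {K B : ℝ}
    (hQ0 : ∀ x y, 0 ≤ Q x y) (hQ : ∀ x, Summable (Q x)) (hμK : ∀ y, |μ y| ≤ K)
    (hv : ∀ y, |v y| ≤ B) (hfix : ∀ x, μ x * v x = c x + ∑' y, hvagWeight ℓ Q μ x y * v y)
    (x : X) : v ℓ + μ x * (v x - v ℓ) = c x + ∑' y, Q x y * (μ y * (v y - v ℓ)) := by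
  have hQμ : Summable fun y => Q x y * μ y := summable_mul_of_abs_le (hQ0 x) (hQ x) hμK
  have hQμv : Summable fun y => Q x y * (μ y * v y) :=
    summable_mul_of_abs_le (hQ0 x) (hQ x) fun y => by
      rw [abs_mul]
      exact mul_le_mul (hμK y) (hv y) (abs_nonneg _) ((abs_nonneg _).trans (hμK y))
  have hweight : ∀ y, hvagWeight ℓ Q μ x y * v y = Q x y * (μ y * v y) +
      if y = ℓ then (μ x - 1 - offMass ℓ Q μ x - Q x ℓ * μ ℓ) * v ℓ else 0 := by
    intro y
    unfold hvagWeight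
    split_ifs with hy
    · subst hy; ring
    · ring
  have hW : ∑' y, hvagWeight ℓ Q μ x y * v y = ∑' y, Q x y * (μ y * v y) +
      (μ x - 1 - offMass ℓ Q μ x - Q x ℓ * μ ℓ) * v ℓ := by
    rw [tsum_congr hweight, hQμv.tsum_add (hasSum_ite_eq ℓ _).summable, tsum_ite_eq]
  have hmass : ∑' y, Q x y * μ y = Q x ℓ * μ ℓ + offMass ℓ Q μ x := hQμ.tsum_eq_add_tsum_ite ℓ
  have hsplit : ∑' y, Q x y * (μ y * (v y - v ℓ)) =
      ∑' y, Q x y * (μ y * v y) - (∑' y, Q x y * μ y) * v ℓ := by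
    rw [← tsum_mul_right, ← hQμv.tsum_sub (hQμ.mul_right _)]
    exact tsum_congr fun y => by ring
  rw [hsplit, hmass]
  linear_combination hfix x + hW

end HVAG

theorem stmt7 {X A : Type*} [DecidableEq X] (ℓ : X)
    (q : X → A → X → ℝ) (hq0 : ∀ x a y, 0 ≤ q x a y)
    (hqsto : ∀ x a, HasSum (q x a) 1)
    (c : X → A → ℝ) (Cc : ℝ) (hc : ∀ x a, |c x a| ≤ Cc)
    (K : ℝ) (hK : 1 ≤ K)
    (μ : X → ℝ) (hμ1 : ∀ x, 1 ≤ μ x) (hμK : ∀ x, μ x ≤ K)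
    (hμ : ∀ x a, 1 + ∑' y, (if y = ℓ then 0 else q x a y * μ y) ≤ μ x)
    (β : ℝ) (hβl : (K - 1) / K ≤ β) (hβu : β < 1)
    (φ : X → A) :
    letI Pb : Option X → Option X → ℝ := fun x y =>
      match x, y with
      | some x, some y =>
          if y = ℓ then
            (μ x - 1 - ∑' z, (if z = ℓ then 0 else q x (φ x) z * μ z)) / (β * μ x)
          else q x (φ x) y * μ y / (β * μ x)
      | some x, none => 1 - (μ x - 1) / (β * μ x)
      | none, some _ => 0
      | none, none => 1
    letI cb : Option X → ℝ := fun x =>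
      match x with
      | some x => c x (φ x) / μ x
      | none => 0
    letI vbar : Option X → ℝ := fun x => ∑' n : ℕ, β ^ n * iterR Pb cb n x
    letI h : X → ℝ := fun x => μ x * (vbar (some x) - vbar (some ℓ))
    (∀ x : X, vbar (some ℓ) + h x = c x (φ x) + ∑' y, q x (φ x) y * h y) ∧
    (∀ x : X,
      limsup (fun N : ℕ =>
          (1 / (N : ℝ)) * ∑ n ∈ Finset.range N,
            iterR (fun x y => q x (φ x) y) (fun x => c x (φ x)) n x) atTop
        = vbar (some ℓ)) := by
  have hQ : IsStochastic fun x y => q x (φ x) y := ⟨fun x => hq0 x (φ x), fun x => hqsto x (φ x)⟩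
  have hμ0 : ∀ x, 0 ≤ μ x := fun x => zero_le_one.trans (hμ1 x)
  have hμK' : ∀ x, |μ x| ≤ K := fun x => (abs_of_nonneg (hμ0 x)).trans_le (hμK x)
  have hβ0 : 0 ≤ β := (div_nonneg (by linarith) (by linarith)).trans hβl
  have hw0 := hvagWeight_nonneg hQ.nonneg hμ0 fun x => hμ x (φ x)
  have hw := hasSum_hvagWeight (ℓ := ℓ) hQ.nonneg (fun x => (hQ.hasSum_one x).summable) hμK'
  have hβμ : ∀ x, μ x - 1 ≤ β * μ x := fun x => sub_one_le_mul_of_le hK (hμK x) hβl hβu.le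
  have hcost := abs_hvagCost_le hμ1 (fun x => hc x (φ x)) ((abs_nonneg _).trans (hc ℓ (φ ℓ)))
  have hv := abs_discountedValue_le (isStochastic_hvagKernel hw0 hw hβμ hμ0 hβ0) hβ0 hβu hcost
  have hpoisson := poisson_of_mul_eq_add_tsum_hvagWeight hQ.nonneg
    (fun x => (hQ.hasSum_one x).summable) hμK' (fun y => hv (some y))
    (mul_discountedValue_hvagKernel hw0 hw hβμ hμ1 hβ0 hβu hcost)
  have hh : ∀ y, |μ y * (discountedValue (hvagKernel ℓ (fun x y => q x (φ x) y) μ β) β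
      (hvagCost μ (fun x => c x (φ x))) (some y) - discountedValue _ β _ (some ℓ))| ≤
      K * ((1 - β)⁻¹ * Cc + (1 - β)⁻¹ * Cc) := fun y => by
    rw [abs_mul]
    exact mul_le_mul (hμK' y) ((abs_sub _ _).trans (add_le_add (hv _) (hv _))) (abs_nonneg _)
      (by linarith)
  -- The statement's kernel and cost are anonymous `match` terms that the elaborator does not
  -- unfold; `convert` reduces them to pointwise equalities with `hvagKernel` and `hvagCost`.
  beta_reduce
  unfold discountedValue at hpoisson hh
  convert (⟨hpoisson, fun x => (hQ.tendsto_average_iterR_of_poisson hh hpoisson x).limsup_eq⟩ :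
    _ ∧ _) using 16
  all_goals split <;> rfl
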